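/- Let n ≥ 5 and G = K₂ ∨ (K_{n−4} + 2K₁) (a graph on n vertices). Then ρ_D(G) > (2n² + 6n − 28)/n. -/

import Mathlib

open SimpleGraph Finset

/-- The transmission of a vertex: sum of distances to all other vertices. -/
noncomputable def transmission {V : Type*} [Fintype V] (G : SimpleGraph V) (u : V) : ℕ :=
  ∑ v, G.dist u v

/-- The transmission σ(G): sum of distances over all unordered pairs. -/
noncomputable def transmissionOf {V : Type*} [Fintype V] (G : SimpleGraph V) : ℝ :=
  (1 / 2) * ∑ u, ∑ v, (G.dist u v : ℝ)

/-- The distance signless Laplacian matrix Q_D(G) = Tr(G) + 𝒟(G). -/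
noncomputable def distSignlessLaplacian {V : Type*} [Fintype V] [DecidableEq V]
    (G : SimpleGraph V) : Matrix V V ℝ :=
  fun u v => (if u = v then (transmission G u : ℝ) else 0) + (G.dist u v : ℝ)

/-- `ρ` is the distance signless Laplacian spectral radius of `G`,
i.e. the largest eigenvalue of `Q_D(G)`. -/
noncomputable def IsDistSLSpectralRadius {V : Type*} [Fintype V] [DecidableEq V]
    (G : SimpleGraph V) (ρ : ℝ) : Prop :=
  IsGreatest {μ : ℝ | Module.End.HasEigenvalue (Matrix.toLin' (distSignlessLaplacian G)) μ} ρ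

/-- Join of two graphs. -/
def joinGraph {α β : Type*} (G : SimpleGraph α) (H : SimpleGraph β) : SimpleGraph (α ⊕ β) :=
  SimpleGraph.fromRel (fun x y =>
    match x, y with
    | Sum.inl a, Sum.inl b => G.Adj a b
    | Sum.inr a, Sum.inr b => H.Adj a b
    | Sum.inl _, Sum.inr _ => True
    | Sum.inr _, Sum.inl _ => False)

/-- The graph H_{t,n-t}. -/
def HGraph (n t : ℕ) : SimpleGraph (Fin n ⊕ Fin n) :=
  SimpleGraph.fromRel (fun x y =>
    match x, y with
    | Sum.inl i, Sum.inr j => (j : ℕ) < n - t ∨ (i : ℕ) < t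
    | _, _ => False)

/-- Hamilton-connected. -/
def IsHamiltonianConnected {V : Type*} [DecidableEq V] (G : SimpleGraph V) : Prop :=
  ∀ u v : V, u ≠ v → ∃ p : G.Walk u v, p.IsHamiltonian

/-- Traceable from every vertex. -/
def TraceableFromEveryVertex {V : Type*} [DecidableEq V] (G : SimpleGraph V) : Prop :=
  ∀ u : V, ∃ v : V, ∃ p : G.Walk u v, p.IsHamiltonian

/-- K_{n-1} + e : complete graph on n-1 vertices with a pendant edge. -/
def KPlusPendant (n : ℕ) : SimpleGraph (Fin (n - 1) ⊕ Fin 1) :=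
  SimpleGraph.fromRel (fun x y =>
    match x, y with
    | Sum.inl a, Sum.inl b => a ≠ b
    | Sum.inl a, Sum.inr _ => (a : ℕ) = 0
    | _, _ => False)

/-!
The bound is the Rayleigh quotient of the all-ones vector: `𝟙ᵀ Q_D 𝟙 / n = 2 ∑ Tr(u) / n`,
and `∑ Tr(u) = n² + 3n - 14` for this graph. Doubling the weight of the two vertices of `2K₁`,
which have the largest transmission, gives the Rayleigh quotient `(2m² + 42m + 72) / (m + 10)`
with `m = n - 4`, and this exceeds the bound by `8(m² - m + 1) / (n (m + 10)) > 0`.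
-/

open Matrix Module.End

theorem Matrix.IsHermitian.dotProduct_mulVec_le {ι : Type*} [Fintype ι] [DecidableEq ι]
    {A : Matrix ι ι ℝ} (hA : A.IsHermitian) {ρ : ℝ}
    (hρ : ρ ∈ upperBounds {μ | HasEigenvalue (toLin' A) μ}) (x : ι → ℝ) :
    x ⬝ᵥ A *ᵥ x ≤ ρ * (x ⬝ᵥ x) := by
  set B := algebraMap ℝ (Matrix ι ι ℝ) ρ - A
  have hB : B.IsHermitian := (isHermitian_diagonal _).sub hA
  -- The spectrum of `ρ - A` is `ρ - spectrum A`, hence nonnegative.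
  have hB_psd : B.PosSemidef := by
    refine hB.posSemidef_iff_eigenvalues_nonneg.2 fun i => ?_
    obtain ⟨_, rfl, μ, hμ, hi⟩ :=
      (spectrum.singleton_sub_eq A ρ).symm ▸ hB.eigenvalues_mem_spectrum_real i
    have hμρ := hρ (hasEigenvalue_iff_mem_spectrum.2 ((spectrum_toLin' A).symm ▸ hμ))
    simp only [Pi.zero_apply]
    linarith
  simpa [B, Algebra.algebraMap_eq_smul_one, sub_mulVec, smul_mulVec, dotProduct_sub] using
    hB_psd.dotProduct_mulVec_nonneg x

theorem Fintype.sum_ite_eq_zero_const {ι R : Type*} [Fintype ι] [DecidableEq ι] [NonAssocRing R]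
    (i : ι) (c : R) : ∑ j, (if i = j then 0 else c) = (Fintype.card ι - 1 : R) * c := by
  rw [sum_ite, sum_const_zero, zero_add, sum_const, filter_ne, card_erase_of_mem (mem_univ i),
    card_univ, nsmul_eq_mul, Nat.cast_sub (Fintype.card_pos_iff.2 ⟨i⟩), Nat.cast_one]

theorem SimpleGraph.dist_eq_of_forall_adj {V : Type*} [DecidableEq V] {G : SimpleGraph V}
    [DecidableRel G.Adj] {w : V} (hw : ∀ v, v ≠ w → G.Adj w v) (u v : V) :
    G.dist u v = if u = v then 0 else if G.Adj u v then 1 else 2 := by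
  split_ifs with huv hadj
  · simp [huv]
  · exact dist_eq_one_iff_adj.2 hadj
  · have hu : u ≠ w := by rintro rfl; exact hadj (hw v (by rintro rfl; exact huv rfl))
    have hv : v ≠ w := by rintro rfl; exact hadj (hw u hu).symm
    let p : G.Walk u v := (hw u hu).symm.toWalk.concat (hw v hv)
    have h0 : G.dist u v ≠ 0 := by simpa [p.reachable.dist_eq_zero_iff] using huv
    have h1 : G.dist u v ≠ 1 := fun h => hadj (dist_eq_one_iff_adj.1 h)
    have h2 : G.dist u v ≤ 2 := dist_le p
    omega

section DistSignlessLaplacian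

variable {V : Type*} [Fintype V] [DecidableEq V] (G : SimpleGraph V)

theorem distSignlessLaplacian_isHermitian : (distSignlessLaplacian G).IsHermitian := by
  ext u v
  by_cases h : u = v
  · simp [h]
  · simp [distSignlessLaplacian, h, Ne.symm h, dist_comm]

theorem distSignlessLaplacian_mulVec (x : V → ℝ) (u : V) :
    (distSignlessLaplacian G *ᵥ x) u = ∑ v, (G.dist u v : ℝ) * (x u + x v) := by
  simp [mulVec, dotProduct, distSignlessLaplacian, transmission, add_mul, mul_add,
    sum_add_distrib, sum_mul]

end DistSignlessLaplacian

def joinK₂CliqueTwoK₁ (m : ℕ) : SimpleGraph (Fin 2 ⊕ (Fin m ⊕ Fin 2)) :=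
  joinGraph ⊤ ((⊤ : SimpleGraph (Fin m)) ⊕g ⊥)

def testVector (m : ℕ) : Fin 2 ⊕ (Fin m ⊕ Fin 2) → ℝ :=
  Sum.elim 1 (Sum.elim 1 2)

theorem joinK₂CliqueTwoK₁_adj_inl_zero (m : ℕ) (v : Fin 2 ⊕ (Fin m ⊕ Fin 2))
    (hv : v ≠ Sum.inl 0) : (joinK₂CliqueTwoK₁ m).Adj (Sum.inl 0) v := by
  rcases v with a | b
  · fin_cases a <;> simp_all [joinK₂CliqueTwoK₁, joinGraph]
  · simp [joinK₂CliqueTwoK₁, joinGraph]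

theorem testVector_dotProduct_self (m : ℕ) : testVector m ⬝ᵥ testVector m = m + 10 := by
  simp only [dotProduct, testVector, Fintype.sum_sum_type, Sum.elim_inl, Sum.elim_inr,
    Pi.ofNat_apply, mul_one, sum_const, card_univ, Fintype.card_fin, nsmul_eq_mul, Nat.cast_ofNat]
  ring

theorem testVector_dotProduct_distSignlessLaplacian_mulVec (m : ℕ) :
    testVector m ⬝ᵥ distSignlessLaplacian (joinK₂CliqueTwoK₁ m) *ᵥ testVector m
      = 2 * m ^ 2 + 42 * m + 72 := by
  classical
  simp only [dotProduct, distSignlessLaplacian_mulVec, mul_sum,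
    dist_eq_of_forall_adj (joinK₂CliqueTwoK₁_adj_inl_zero m)]
  simp +contextual only [testVector, joinK₂CliqueTwoK₁, joinGraph, top_adj, ne_eq, sum_adj,
    bot_adj, fromRel_adj, not_false_eq_true, true_and, Nat.cast_ite, CharP.cast_eq_zero,
    Nat.cast_one, Nat.cast_ofNat, ite_mul, zero_mul, one_mul, mul_ite, mul_zero,
    Fintype.sum_sum_type, Sum.elim_inl, Fin.sum_univ_two, Fin.isValue, Sum.elim_inr, Pi.ofNat_apply,
    Sum.inl.injEq, true_or, ↓reduceIte, reduceCtorEq, or_false, sum_const, card_univ,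
    Fintype.card_fin, smul_add, nsmul_eq_mul, mul_one, zero_ne_one, zero_add, one_ne_zero,
    add_zero, or_true, Sum.inr.injEq, Fintype.sum_ite_eq_zero_const, or_self]
  ring

/-- For G = K₂ ∨ (K_{n-4} + 2K₁) on n ≥ 5 vertices, ρ_D(G) > (2n² + 6n - 28)/n. -/
theorem stmt_15 (n : ℕ) (hn : 5 ≤ n) (ρ : ℝ)
    (hρ : IsDistSLSpectralRadius (joinGraph (⊤ : SimpleGraph (Fin 2))
      ((⊤ : SimpleGraph (Fin (n - 4))) ⊕g (⊥ : SimpleGraph (Fin 2)))) ρ) :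
    (2 * (n : ℝ) ^ 2 + 6 * (n : ℝ) - 28) / (n : ℝ) < ρ := by
  obtain ⟨m, rfl⟩ : ∃ m, n = m + 4 := ⟨n - 4, by omega⟩
  have hρ' : IsDistSLSpectralRadius (joinK₂CliqueTwoK₁ m) ρ := hρ
  have hbound :=
    (distSignlessLaplacian_isHermitian _).dotProduct_mulVec_le hρ'.2 (testVector m)
  rw [testVector_dotProduct_distSignlessLaplacian_mulVec, testVector_dotProduct_self] at hbound
  push_cast
  calc (2 * ((m : ℝ) + 4) ^ 2 + 6 * (m + 4) - 28) / (m + 4)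
      < (2 * m ^ 2 + 42 * m + 72) / (m + 10) := by
        rw [div_lt_div_iff₀ (by positivity) (by positivity)]
        nlinarith [sq_nonneg ((m : ℝ) - 1)]
    _ ≤ ρ := by rwa [div_le_iff₀ (by positivity)]
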